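/- Consider R = ℤ_(3) (integers localized at 3) and G = S_3 acting on R[x,y] via the representation sending the transpositions (1 2) and (2 3) to the matrices [[1,3],[0,−1]] and [[−2,−3],[1,2]] respectively. Then ℚ[x,y]^G = ℚ[f,g] with f = x²+3xy+3y² and g = 2x³+9x²y+9xy², the element h := (g²−4f³)/27 lies in R[x,y]^G, and R[x,y]^G is not equal to R[f,g]; in particular R[x,y]^G is not a polynomial ring generated by f and g. -/

import Mathlib

open MvPolynomial

/-- The linear-substitution action of an invertible matrix `M` on polynomials:
`(M • f)(a) = f (M⁻¹ • a)`, i.e. `X i ↦ ∑ j (M⁻¹) i j • X j`. -/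
noncomputable def gAct {R : Type*} [CommRing R] {n : ℕ}
    (M : Matrix.GeneralLinearGroup (Fin n) R) :
    MvPolynomial (Fin n) R →ₐ[R] MvPolynomial (Fin n) R :=
  aeval fun i => ∑ j, C ((M⁻¹ : Matrix.GeneralLinearGroup (Fin n) R) i j) * X j

/-- The ring of invariants `R[x_1,…,x_n]^G` of the representation `ρ : G →* GL_n(R)`. -/
noncomputable def invariantRing {R : Type*} [CommRing R] {n : ℕ} {G : Type*} [Group G]
    (ρ : G →* Matrix.GeneralLinearGroup (Fin n) R) : Subalgebra R (MvPolynomial (Fin n) R) :=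
  ⨅ σ : G, AlgHom.equalizer (gAct (ρ σ)) (AlgHom.id R _)

/-- A regular local ring: Noetherian, local, and the Krull dimension equals the
dimension of the cotangent space. -/
def IsRegularLocalRingP (A : Type*) [CommRing A] : Prop :=
  IsNoetherianRing A ∧ ∃ h : IsLocalRing A,
    haveI := h
    ringKrullDim A =
      Module.finrank (IsLocalRing.ResidueField A) (IsLocalRing.CotangentSpace A)

/-- A regular ring: Noetherian, and all localizations at primes are regular local rings. -/
def IsRegularRingP (A : Type*) [CommRing A] : Prop :=
  IsNoetherianRing A ∧ ∀ (p : Ideal A) (hp : p.IsPrime),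
    haveI := hp
    IsRegularLocalRingP (Localization.AtPrime p)

open scoped TensorProduct in
/-- The tensor product `B_{I_1}R ⊗_R ⋯ ⊗_R B_{I_n}R` of the blowup (Rees) algebras of the
ideals `I i`. -/
noncomputable def BlowupTensor (R : Type*) [CommRing R] {n : ℕ} (I : Fin n → Ideal R) : Type _ :=
  ⨂[R] i : Fin n, ↥(reesAlgebra (I i))

noncomputable instance (R : Type*) [CommRing R] {n : ℕ} (I : Fin n → Ideal R) :
    CommRing (BlowupTensor R I) := by unfold BlowupTensor; infer_instance

noncomputable instance (R : Type*) [CommRing R] {n : ℕ} (I : Fin n → Ideal R) :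
    Algebra R (BlowupTensor R I) := by unfold BlowupTensor; infer_instance

/-- A pseudoreflection: a nonidentity invertible matrix fixing a hyperplane pointwise,
i.e. `g - 1` has rank at most one. -/
def IsPseudoreflection {n : ℕ} {K : Type*} [Field K]
    (g : Matrix.GeneralLinearGroup (Fin n) K) : Prop :=
  g ≠ 1 ∧ Matrix.rank ((g : Matrix (Fin n) (Fin n) K) - 1) ≤ 1

instance : (Ideal.span {(3 : ℤ)}).IsPrime := by
  rw [Ideal.span_singleton_prime (by norm_num)]
  exact Int.prime_three

/-- `ℤ_(3)`, the integers localized at the prime `3`. -/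
noncomputable abbrev Zloc3 : Type := Localization.AtPrime (Ideal.span {(3 : ℤ)})

/-- The matrix `[[1,3],[0,-1]]` (image of the transposition `(1 2)`). -/
noncomputable def M1 (A : Type*) [CommRing A] : Matrix.GeneralLinearGroup (Fin 2) A :=
  ⟨!![1, 3; 0, -1], !![1, 3; 0, -1],
    by rw [Matrix.mul_fin_two, Matrix.one_fin_two]; norm_num,
    by rw [Matrix.mul_fin_two, Matrix.one_fin_two]; norm_num⟩

/-- The matrix `[[-2,-3],[1,2]]` (image of the transposition `(2 3)`). -/
noncomputable def M2 (A : Type*) [CommRing A] : Matrix.GeneralLinearGroup (Fin 2) A :=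
  ⟨!![-2, -3; 1, 2], !![-2, -3; 1, 2],
    by rw [Matrix.mul_fin_two, Matrix.one_fin_two]; norm_num,
    by rw [Matrix.mul_fin_two, Matrix.one_fin_two]; norm_num⟩

/-- `f = x² + 3xy + 3y²`. -/
noncomputable def fpoly (A : Type*) [CommRing A] : MvPolynomial (Fin 2) A :=
  X 0 ^ 2 + 3 * X 0 * X 1 + 3 * X 1 ^ 2

/-- `g = 2x³ + 9x²y + 9xy²`. -/
noncomputable def gpoly (A : Type*) [CommRing A] : MvPolynomial (Fin 2) A :=
  2 * X 0 ^ 3 + 9 * X 0 ^ 2 * X 1 + 9 * X 0 * X 1 ^ 2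

/-!
Over a ring `K` in which `6` is invertible, substituting the linear forms `x + 3y`, `x`,
`-(2x + 3y)` for `z₀, z₁, z₂` is a surjection `K[z₀,z₁,z₂] → K[x,y]` intertwining the permutation
action with `ρ`: the forms sum to zero and the two matrices permute them like `(1 2)` and `(2 3)`.
Averaging a preimage of an invariant over `S₃` gives a symmetric preimage, and the elementary
symmetric polynomials map to `0`, `-3f` and `-g`, so the invariants are `K[f,g]`.

Over `ℤ_(3)`, `h = -(y(x+y)(x+2y))²` is invariant and `27h = g² - 4f³`. Reducing modulo the
maximal ideal and restricting to the line `x = 0` kills `f ≡ 3y²` and `g`, hence sends all of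
`ℤ_(3)[f,g]` to constants, whereas `h` goes to `-4y⁶`.
-/

open Equiv

section Action

variable {R : Type*} [CommRing R] {n : ℕ}

lemma gAct_mul (M N : Matrix.GeneralLinearGroup (Fin n) R) :
    gAct (M * N) = (gAct M).comp (gAct N) := by
  refine algHom_ext fun i ↦ ?_
  simp only [gAct, aeval_X, AlgHom.comp_apply, map_sum, map_mul, aeval_C, algebraMap_eq,
    mul_inv_rev]
  simp only [Finset.mul_sum, ← mul_assoc, ← C_mul]
  rw [Finset.sum_comm]
  refine Finset.sum_congr rfl fun j _ ↦ ?_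
  simp [Units.val_mul, Matrix.mul_apply, map_sum, Finset.sum_mul]

lemma gAct_one : gAct (1 : Matrix.GeneralLinearGroup (Fin n) R) = AlgHom.id R _ :=
  algHom_ext fun i ↦ by simp [gAct, Matrix.one_apply]

lemma mem_invariantRing_iff {G : Type*} [Group G] (ρ : G →* Matrix.GeneralLinearGroup (Fin n) R)
    (p : MvPolynomial (Fin n) R) : p ∈ invariantRing ρ ↔ ∀ σ, gAct (ρ σ) p = p := by
  simp [invariantRing, Algebra.mem_iInf, AlgHom.mem_equalizer]

end Action

theorem Equiv.Perm.induction_on_swap_castSucc_succ {m : ℕ} {P : Perm (Fin (m + 1)) → Prop}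
    (one : P 1) (mul : ∀ σ τ, P σ → P τ → P (σ * τ))
    (adjacent : ∀ i : Fin m, P (swap i.castSucc i.succ)) (σ : Perm (Fin (m + 1))) : P σ := by
  have hσ : σ ∈ Submonoid.closure (Set.range fun i : Fin m ↦ swap i.castSucc i.succ) := by
    rw [mclosure_swap_castSucc_succ]; trivial
  induction hσ using Submonoid.closure_induction with
  | mem _ h => obtain ⟨i, rfl⟩ := h; exact adjacent i
  | one => exact one
  | mul σ τ _ _ hσ hτ => exact mul σ τ hσ hτ

lemma mem_invariantRing_of_swap_castSucc_succ {R : Type*} [CommRing R] {n m : ℕ}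
    (ρ : Perm (Fin (m + 1)) →* Matrix.GeneralLinearGroup (Fin n) R) {p : MvPolynomial (Fin n) R}
    (hp : ∀ i : Fin m, gAct (ρ (swap i.castSucc i.succ)) p = p) : p ∈ invariantRing ρ := by
  refine (mem_invariantRing_iff ρ p).2 (Perm.induction_on_swap_castSucc_succ ?_ ?_ hp)
  · simp [gAct_one]
  · intro σ τ hσ hτ
    simp [gAct_mul, hσ, hτ]

lemma symmetricSubalgebra_eq_adjoin_esymm (σ R : Type*) [Fintype σ] [CommRing R] {n : ℕ}
    (hn : Fintype.card σ ≤ n) :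
    symmetricSubalgebra σ R = Algebra.adjoin R (Set.range fun i : Fin n ↦ esymm σ R (i + 1)) := by
  rw [Algebra.adjoin_range_eq_range_aeval]
  ext p
  rw [AlgHom.mem_range]
  refine ⟨fun hp ↦ ?_, ?_⟩
  · obtain ⟨q, hq⟩ := esymmAlgHom_surjective R hn ⟨p, hp⟩
    exact ⟨q, (esymmAlgHom_apply q).symm.trans (congrArg Subtype.val hq)⟩
  · rintro ⟨q, rfl⟩
    rw [← esymmAlgHom_apply]
    exact (esymmAlgHom σ R _ q).2

theorem invariantRing_le_map_symmetricSubalgebra {ι K : Type*} [Fintype ι] [DecidableEq ι]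
    [CommRing K] {n : ℕ} (ρ : Perm ι →* Matrix.GeneralLinearGroup (Fin n) K)
    (π : MvPolynomial ι K →ₐ[K] MvPolynomial (Fin n) K) (hπ : Function.Surjective π)
    (hequiv : ∀ σ : Perm ι, π.comp (rename σ) = (gAct (ρ σ)).comp π)
    (hcard : IsUnit (Fintype.card (Perm ι) : K)) :
    invariantRing ρ ≤ (symmetricSubalgebra ι K).map π := by
  intro P hP
  rw [mem_invariantRing_iff] at hP
  obtain ⟨Q, rfl⟩ := hπ P
  obtain ⟨u, hu⟩ := hcard
  refine Subalgebra.mem_map.2 ⟨(↑u⁻¹ : K) • ∑ σ : Perm ι, rename σ Q, fun τ ↦ ?_, ?_⟩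
  · rw [map_smul, map_sum]
    congr 1
    simp_rw [rename_rename, ← Perm.coe_mul]
    exact Fintype.sum_bijective (τ * ·) (Group.mulLeft_bijective τ) _ _ fun σ ↦ rfl
  · have hfix (σ : Perm ι) : π (rename σ Q) = π Q := (AlgHom.congr_fun (hequiv σ) Q).trans (hP σ)
    rw [map_smul, map_sum, Finset.sum_congr rfl fun σ _ ↦ hfix σ, Finset.sum_const,
      Finset.card_univ, ← Nat.cast_smul_eq_nsmul K, smul_smul, ← hu, Units.inv_mul, one_smul]

section

variable (A : Type*) [CommRing A]

noncomputable def hpoly : MvPolynomial (Fin 2) A :=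
  -(X 1 * (X 0 + X 1) * (X 0 + 2 * X 1)) ^ 2

lemma hpoly_mul_27 : 27 * hpoly A = gpoly A ^ 2 - 4 * fpoly A ^ 3 := by
  simp only [hpoly, gpoly, fpoly]; ring

lemma gAct_M1 : gAct (M1 A) = aeval ![X 0 + 3 * X 1, -X 1] := by
  refine algHom_ext fun i ↦ ?_
  fin_cases i <;> simp [gAct, M1, Fin.sum_univ_two, map_ofNat, C_neg]

lemma gAct_M2 : gAct (M2 A) = aeval ![-(2 * X 0 + 3 * X 1), X 0 + 2 * X 1] := by
  refine algHom_ext fun i ↦ ?_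
  fin_cases i
  · simp [gAct, M2, Fin.sum_univ_two, map_ofNat, C_neg]; ring
  · simp [gAct, M2, Fin.sum_univ_two, map_ofNat]

lemma Matrix.GeneralLinearGroup.map_M1 {B : Type*} [CommRing B] (φ : A →+* B) :
    Matrix.GeneralLinearGroup.map φ (M1 A) = M1 B := by
  ext i j
  fin_cases i <;> fin_cases j <;> simp [M1, map_ofNat]

lemma Matrix.GeneralLinearGroup.map_M2 {B : Type*} [CommRing B] (φ : A →+* B) :
    Matrix.GeneralLinearGroup.map φ (M2 A) = M2 B := by
  ext i j
  fin_cases i <;> fin_cases j <;> simp [M2, map_ofNat]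

variable {A}

lemma mem_invariantRing_of_M1_M2 (ρ : Perm (Fin 3) →* Matrix.GeneralLinearGroup (Fin 2) A)
    (h12 : ρ (swap 0 1) = M1 A) (h23 : ρ (swap 1 2) = M2 A) {p : MvPolynomial (Fin 2) A}
    (h1 : aeval ![X 0 + 3 * X 1, -X 1] p = p)
    (h2 : aeval ![-(2 * X 0 + 3 * X 1), X 0 + 2 * X 1] p = p) : p ∈ invariantRing ρ :=
  mem_invariantRing_of_swap_castSucc_succ ρ <| Fin.forall_fin_two.2
    ⟨by rwa [Fin.castSucc_zero, Fin.succ_zero_eq_one, h12, gAct_M1],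
      by rwa [Fin.castSucc_one, Fin.succ_one_eq_two, h23, gAct_M2]⟩

lemma fpoly_mem_invariantRing (ρ : Perm (Fin 3) →* Matrix.GeneralLinearGroup (Fin 2) A)
    (h12 : ρ (swap 0 1) = M1 A) (h23 : ρ (swap 1 2) = M2 A) : fpoly A ∈ invariantRing ρ :=
  mem_invariantRing_of_M1_M2 ρ h12 h23 (by simp [fpoly, map_ofNat]; ring)
    (by simp [fpoly, map_ofNat]; ring)

lemma gpoly_mem_invariantRing (ρ : Perm (Fin 3) →* Matrix.GeneralLinearGroup (Fin 2) A)
    (h12 : ρ (swap 0 1) = M1 A) (h23 : ρ (swap 1 2) = M2 A) : gpoly A ∈ invariantRing ρ :=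
  mem_invariantRing_of_M1_M2 ρ h12 h23 (by simp [gpoly, map_ofNat]; ring)
    (by simp [gpoly, map_ofNat]; ring)

lemma hpoly_mem_invariantRing (ρ : Perm (Fin 3) →* Matrix.GeneralLinearGroup (Fin 2) A)
    (h12 : ρ (swap 0 1) = M1 A) (h23 : ρ (swap 1 2) = M2 A) : hpoly A ∈ invariantRing ρ :=
  mem_invariantRing_of_M1_M2 ρ h12 h23 (by simp [hpoly, map_ofNat]; ring)
    (by simp [hpoly, map_ofNat]; ring)

theorem hpoly_notMem_adjoin_fpoly_gpoly {k : Type*} [CommRing k] [Nontrivial k] [Algebra A k]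
    (h3 : (3 : k) = 0) : hpoly A ∉ Algebra.adjoin A {fpoly A, gpoly A} := by
  intro hmem
  let ψ : MvPolynomial (Fin 2) A →ₐ[A] Polynomial k := aeval ![0, Polynomial.X]
  have h3X : (3 : Polynomial k) = 0 := by rw [← map_ofNat Polynomial.C, h3, map_zero]
  have hf : ψ (fpoly A) = 0 := by simp [ψ, fpoly, h3X]
  have hg : ψ (gpoly A) = 0 := by simp [ψ, gpoly]
  have hconst : ψ (hpoly A) ∈ (⊥ : Subalgebra A (Polynomial k)) := by
    refine Algebra.adjoin_le ?_ (AlgHom.map_adjoin ψ _ ▸ Subalgebra.mem_map.2 ⟨_, hmem, rfl⟩)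
    rintro _ ⟨_, rfl | rfl, rfl⟩
    exacts [hf ▸ zero_mem _, hg ▸ zero_mem _]
  obtain ⟨c, hc⟩ := Algebra.mem_bot.1 hconst
  have hψh : ψ (hpoly A) = -Polynomial.X ^ 6 := by
    simp only [ψ, hpoly, map_neg, map_pow, map_mul, map_add, map_ofNat, aeval_X,
      Matrix.cons_val_zero, Matrix.cons_val_one]
    linear_combination (-Polynomial.X ^ 6 : Polynomial k) * h3X
  have := congrArg (Polynomial.coeff · 6) (hc.trans hψh)
  simp [Polynomial.algebraMap_apply] at this

end

section

variable (K : Type*) [CommRing K]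

noncomputable def permProj : MvPolynomial (Fin 3) K →ₐ[K] MvPolynomial (Fin 2) K :=
  aeval ![X 0 + 3 * X 1, X 0, -(2 * X 0 + 3 * X 1)]

variable {K}

lemma permProj_comp_rename (ρ : Perm (Fin 3) →* Matrix.GeneralLinearGroup (Fin 2) K)
    (h12 : ρ (swap 0 1) = M1 K) (h23 : ρ (swap 1 2) = M2 K) (σ : Perm (Fin 3)) :
    (permProj K).comp (rename σ) = (gAct (ρ σ)).comp (permProj K) := by
  induction σ using Perm.induction_on_swap_castSucc_succ with
  | one => simp [gAct_one, rename_id]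
  | mul σ τ hσ hτ =>
    rw [map_mul, gAct_mul, Perm.coe_mul, ← rename_comp_rename, ← AlgHom.comp_assoc, hσ,
      AlgHom.comp_assoc, hτ, AlgHom.comp_assoc]
  | adjacent i =>
    revert i
    refine Fin.forall_fin_two.2 ⟨?_, ?_⟩
    · rw [Fin.castSucc_zero, Fin.succ_zero_eq_one, h12, gAct_M1]
      refine algHom_ext fun j ↦ ?_
      fin_cases j <;> simp [permProj, swap_apply_def, map_ofNat]
      ring
    · rw [Fin.castSucc_one, Fin.succ_one_eq_two, h23, gAct_M2]
      refine algHom_ext fun j ↦ ?_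
      fin_cases j <;> simp [permProj, swap_apply_def, map_ofNat] <;> ring

lemma permProj_surjective (h3 : IsUnit (3 : K)) : Function.Surjective (permProj K) := by
  obtain ⟨u, hu⟩ := h3
  let s : MvPolynomial (Fin 2) K →ₐ[K] MvPolynomial (Fin 3) K :=
    aeval ![X 1, (↑u⁻¹ : K) • (X 0 - X 1)]
  have hs : (permProj K).comp s = AlgHom.id K _ := by
    refine algHom_ext fun i ↦ ?_
    fin_cases i
    · simp [s, permProj]
    · have h3X : (3 : MvPolynomial (Fin 2) K) * X 1 = (u : K) • X 1 := by
        rw [hu, smul_eq_C_mul, map_ofNat]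
      simp [s, permProj, h3X, smul_smul]
  exact fun p ↦ ⟨s p, AlgHom.congr_fun hs p⟩

lemma permProj_esymm_one : permProj K (esymm (Fin 3) K 1) = 0 := by
  simp [permProj, esymm_one, Fin.sum_univ_three]
  ring

lemma permProj_esymm_two : permProj K (esymm (Fin 3) K 2) = (-3 : K) • fpoly K := by
  rw [esymm, show (Finset.univ : Finset (Fin 3)).powersetCard 2 = {{0, 1}, {0, 2}, {1, 2}} by
    decide]
  simp +decide [permProj, fpoly, smul_eq_C_mul, map_ofNat]
  ring

lemma permProj_esymm_three : permProj K (esymm (Fin 3) K 3) = (-1 : K) • gpoly K := by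
  rw [esymm, show (Finset.univ : Finset (Fin 3)).powersetCard 3 = {{0, 1, 2}} by decide]
  simp [permProj, gpoly]
  ring

lemma map_permProj_symmetricSubalgebra_le :
    (symmetricSubalgebra (Fin 3) K).map (permProj K) ≤ Algebra.adjoin K {fpoly K, gpoly K} := by
  have hf : fpoly K ∈ Algebra.adjoin K {fpoly K, gpoly K} := Algebra.subset_adjoin (by simp)
  have hg : gpoly K ∈ Algebra.adjoin K {fpoly K, gpoly K} := Algebra.subset_adjoin (by simp)
  rw [symmetricSubalgebra_eq_adjoin_esymm (Fin 3) K (Fintype.card_fin 3).le, AlgHom.map_adjoin,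
    Algebra.adjoin_le_iff]
  rintro _ ⟨_, ⟨i, rfl⟩, rfl⟩
  fin_cases i
  · show permProj K (esymm (Fin 3) K 1) ∈ _
    rw [permProj_esymm_one]; exact zero_mem _
  · show permProj K (esymm (Fin 3) K 2) ∈ _
    rw [permProj_esymm_two]; exact Subalgebra.smul_mem _ hf _
  · show permProj K (esymm (Fin 3) K 3) ∈ _
    rw [permProj_esymm_three]; exact Subalgebra.smul_mem _ hg _

theorem invariantRing_eq_adjoin_fpoly_gpoly (h6 : IsUnit (6 : K))
    (ρ : Perm (Fin 3) →* Matrix.GeneralLinearGroup (Fin 2) K)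
    (h12 : ρ (swap 0 1) = M1 K) (h23 : ρ (swap 1 2) = M2 K) :
    invariantRing ρ = Algebra.adjoin K {fpoly K, gpoly K} := by
  have h3 : IsUnit (3 : K) := isUnit_of_mul_isUnit_right (x := 2) (by norm_num [h6])
  refine le_antisymm ?_ (Algebra.adjoin_le ?_)
  · calc invariantRing ρ ≤ (symmetricSubalgebra (Fin 3) K).map (permProj K) :=
          invariantRing_le_map_symmetricSubalgebra ρ _ (permProj_surjective h3)
            (permProj_comp_rename ρ h12 h23) (by simpa [Fintype.card_perm, Nat.factorial] using h6)
      _ ≤ _ := map_permProj_symmetricSubalgebra_le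
  · rintro _ (rfl | rfl)
    exacts [fpoly_mem_invariantRing ρ h12 h23, gpoly_mem_invariantRing ρ h12 h23]

end

instance : CharZero Zloc3 :=
  charZero_of_injective_algebraMap
    (IsLocalization.injective Zloc3 (Ideal.span {(3 : ℤ)}).primeCompl_le_nonZeroDivisors)

lemma Zloc3.residueField_three_eq_zero : (3 : IsLocalRing.ResidueField Zloc3) = 0 := by
  have h : algebraMap ℤ Zloc3 3 ∈ IsLocalRing.maximalIdeal Zloc3 :=
    (IsLocalization.AtPrime.to_map_mem_maximal_iff Zloc3 _ 3).2 (Ideal.mem_span_singleton_self 3)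
  have := (IsLocalRing.residue_eq_zero_iff _).2 h
  rwa [map_ofNat, map_ofNat] at this

/-- The example of Mundelius: for `R = ℤ_(3)` and the `S₃`-representation sending
`(1 2) ↦ [[1,3],[0,-1]]` and `(2 3) ↦ [[-2,-3],[1,2]]`, the invariant ring over the fraction
field `ℚ` is `ℚ[f,g]`, the invariant `h = (g² - 4f³)/27` lies in `R[x,y]^G`, and
`R[x,y]^G ≠ R[f,g]`; in particular `R[x,y]^G` is not the polynomial ring on `f` and `g`. -/
theorem stmt18 (ρ : Equiv.Perm (Fin 3) →* Matrix.GeneralLinearGroup (Fin 2) Zloc3)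
    (h12 : ρ (Equiv.swap 0 1) = M1 Zloc3) (h23 : ρ (Equiv.swap 1 2) = M2 Zloc3) :
    (invariantRing
        ((Matrix.GeneralLinearGroup.map (algebraMap Zloc3 (FractionRing Zloc3))).comp ρ) =
      Algebra.adjoin (FractionRing Zloc3)
        {fpoly (FractionRing Zloc3), gpoly (FractionRing Zloc3)}) ∧
    (∃ h : MvPolynomial (Fin 2) Zloc3,
      27 * h = gpoly Zloc3 ^ 2 - 4 * fpoly Zloc3 ^ 3 ∧ h ∈ invariantRing ρ) ∧
    invariantRing ρ ≠ Algebra.adjoin Zloc3 {fpoly Zloc3, gpoly Zloc3} := by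
  have hinv : hpoly Zloc3 ∈ invariantRing ρ := hpoly_mem_invariantRing ρ h12 h23
  refine ⟨invariantRing_eq_adjoin_fpoly_gpoly (isUnit_iff_ne_zero.2 (by norm_num)) _ ?_ ?_,
    ⟨hpoly Zloc3, hpoly_mul_27 Zloc3, hinv⟩, fun heq ↦ ?_⟩
  · simp [h12, Matrix.GeneralLinearGroup.map_M1]
  · simp [h23, Matrix.GeneralLinearGroup.map_M2]
  · exact hpoly_notMem_adjoin_fpoly_gpoly Zloc3.residueField_three_eq_zero (heq ▸ hinv)
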